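/- arXiv:2303.17352 — 5 statements merged into one kernel-verified Lean document; each statement's English description precedes it below -/
import Mathlib

section
/- For a fixed integer n ≥ 2, define the rational sequence R_ℓ = (2^n + ℓ − n − 1)/(2^n + ℓ − n − 2^ℓ) for ℓ ∈ {0, 1, ..., n−1}. Then R_0 = 1, R_{n−1} = 2, and the sequence is strictly increasing in ℓ. -/
/-- The rational sequence `R_ℓ = (2^n + ℓ - n - 1)/(2^n + ℓ - n - 2^ℓ)`. -/
def R (n ℓ : ℕ) : ℚ :=
  ((2:ℚ)^n + ℓ - n - 1) / ((2:ℚ)^n + ℓ - n - 2^ℓ)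

lemma key_nat : ∀ n : ℕ, 2 ≤ n → ∀ ℓ : ℕ, ℓ < n → 2^ℓ + n < 2^n + ℓ := by
  intro n
  induction n with
  | zero => omega
  | succ m ih =>
    intro h2 ℓ hℓ
    rcases Nat.lt_succ_iff_lt_or_eq.mp hℓ with h | rfl
    · rcases Nat.lt_or_ge m 2 with hm | hm
      · interval_cases m
        · omega
        · interval_cases ℓ
          norm_num
      · have h1 := ih hm ℓ h
        have h3 : 2^(m+1) = 2 * 2^m := by rw [pow_succ]; ring
        have h4 : 1 ≤ 2^m := Nat.one_le_two_pow
        omega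
    · have h4 : 2 ≤ 2^ℓ := by
        have : 2^1 ≤ 2^ℓ := Nat.pow_le_pow_right (by norm_num) (by omega)
        simpa using this
      have h3 : 2^(ℓ+1) = 2 * 2^ℓ := by rw [pow_succ]; ring
      omega

lemma den_pos (n ℓ : ℕ) (hn : 2 ≤ n) (hℓ : ℓ ≤ n - 1) :
    (0:ℚ) < (2:ℚ)^n + ℓ - n - 2^ℓ := by
  have h := key_nat n hn ℓ (by omega)
  have h' : ((2^ℓ + n : ℕ) : ℚ) < ((2^n + ℓ : ℕ) : ℚ) := by exact_mod_cast h
  push_cast at h'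
  linarith

lemma step (n ℓ : ℕ) (hn : 2 ≤ n) (hℓ : ℓ + 1 ≤ n - 1) :
    R n ℓ < R n (ℓ+1) := by
  have hD1 : (0:ℚ) < (2:ℚ)^n + ℓ - n - 2^ℓ := den_pos n ℓ hn (by omega)
  have hD2 : (0:ℚ) < (2:ℚ)^n + (ℓ+1:ℕ) - n - 2^(ℓ+1) := den_pos n (ℓ+1) hn hℓ
  have hy : (1:ℚ) ≤ 2^ℓ := one_le_pow₀ (by norm_num)
  rw [R, R, div_lt_div_iff₀ hD1 hD2]
  push_cast
  have h3 : (2:ℚ)^(ℓ+1) = 2 * 2^ℓ := by rw [pow_succ]; ring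
  push_cast at hD2
  nlinarith [mul_pos (lt_of_lt_of_le one_pos hy) hD1, sq_nonneg ((2:ℚ)^ℓ - 1)]

/-- For `n ≥ 2`: `R 0 = 1`, `R (n-1) = 2`, and `R` is strictly increasing on
`{0, 1, ..., n-1}`. -/
theorem R_zero_one_last_two_strictMono (n : ℕ) (hn : 2 ≤ n) :
    R n 0 = 1 ∧ R n (n-1) = 2 ∧
    ∀ ℓ₁ ℓ₂ : ℕ, ℓ₁ < ℓ₂ → ℓ₂ ≤ n - 1 → R n ℓ₁ < R n ℓ₂ := by
  refine ⟨?_, ?_, ?_⟩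
  · have hD : (0:ℚ) < (2:ℚ)^n + (0:ℕ) - n - 2^(0:ℕ) := den_pos n 0 hn (by omega)
    rw [R]
    simp only [Nat.cast_zero, pow_zero, add_zero] at hD ⊢
    rw [div_self (by linarith)]
  · obtain ⟨m, rfl⟩ : ∃ m, n = m + 1 := ⟨n - 1, by omega⟩
    have hm : 1 ≤ m := by omega
    have hy : (2:ℚ) ≤ 2^m := by
      calc (2:ℚ) = 2^1 := by norm_num
      _ ≤ 2^m := pow_le_pow_right₀ (by norm_num) hm
    have hD : (0:ℚ) < (2:ℚ)^(m+1) + m - (m+1) - 2^m := by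
      have := den_pos (m+1) m (by omega) (by omega)
      push_cast at this ⊢
      linarith
    have : (m + 1 : ℕ) - 1 = m := by omega
    rw [this, R, div_eq_iff (by push_cast; push_cast at hD; linarith)]
    push_cast
    rw [pow_succ]
    ring
  · intro ℓ₁ ℓ₂ h12 h2
    induction ℓ₂ with
    | zero => omega
    | succ k ih =>
      rcases Nat.lt_succ_iff_lt_or_eq.mp h12 with h | rfl
      · exact lt_trans (ih h (by omega)) (step n k hn h2)
      · exact step n ℓ₁ hn h2
end

section
/- For a fixed integer n ≥ 2 and the sequence R_ℓ = (2^n + ℓ − n − 1)/(2^n + ℓ − n − 2^ℓ) with ℓ ∈ {0,...,n−1}: if ℓ_1 < ℓ and ℓ_2 < ℓ, then 1/R_ℓ < 1/R_{ℓ_1} + 1/R_{ℓ_2} − 1/R_0. -/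
/-!
Write `1 / R_ℓ = 1 - d_ℓ` with `d_ℓ = (2^ℓ - 1) / (2^n + ℓ - n - 1)` (`oneSubInvR n ℓ`); since
`d_0 = 0` the claim becomes `d_{ℓ₁} + d_{ℓ₂} < d_ℓ`. Clearing denominators, `2 d_k < d_{k+1}` is
equivalent to the positivity of the denominator `2^n + (k+1) - n - 2^(k+1)` of `R_{k+1}`; so `d`
more than doubles at each step up to `n - 1`, and in particular is monotone there. Hence
`d_{ℓ₁} + d_{ℓ₂} ≤ 2 d_{ℓ-1} < d_ℓ`.
-/

theorem add_two_pow_lt_two_pow_add {ℓ n : ℕ} (hℓ : 0 < ℓ) (hℓn : ℓ < n) :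
    n + 2 ^ ℓ < 2 ^ n + ℓ := by
  induction n, hℓn using Nat.le_induction with
  | base => rw [pow_succ]; have := Nat.one_lt_two_pow hℓ.ne'; omega
  | succ n _ ih => rw [pow_succ]; have := Nat.one_le_two_pow (n := n); omega

theorem add_lt_of_two_mul_lt_succ {α : Type*} [Semiring α] [PartialOrder α]
    [IsStrictOrderedRing α] {f : ℕ → α} {ℓ a b : ℕ} (hf₀ : ∀ k, 0 ≤ f k)
    (hf : ∀ k < ℓ, 2 * f k < f (k + 1)) (ha : a < ℓ) (hb : b < ℓ) : f a + f b < f ℓ := by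
  have mono : ∀ j < ℓ, ∀ i ≤ j, f i ≤ f j := by
    intro j
    induction j with
    | zero => intro _ i hi; rw [Nat.le_zero.1 hi]
    | succ j ih =>
      intro hj i hi
      rcases hi.lt_or_eq with hi | rfl
      · calc f i ≤ f j := ih (by omega) i (by omega)
          _ ≤ 2 * f j := by rw [two_mul]; exact le_add_of_nonneg_left (hf₀ j)
          _ ≤ f (j + 1) := (hf j (by omega)).le
      · rfl
  obtain ⟨k, rfl⟩ : ∃ k, ℓ = k + 1 := ⟨ℓ - 1, by omega⟩
  have hk := k.lt_succ_self
  calc f a + f b ≤ f k + f k := add_le_add (mono k hk a (by omega)) (mono k hk b (by omega))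
    _ = 2 * f k := (two_mul _).symm
    _ < f (k + 1) := hf k hk

def oneSubInvR (n ℓ : ℕ) : ℚ :=
  (2 ^ ℓ - 1) / (2 ^ n + ℓ - n - 1)

theorem two_pow_add_sub_sub_one_pos {n : ℕ} (hn : 2 ≤ n) (ℓ : ℕ) :
    (0 : ℚ) < 2 ^ n + ℓ - n - 1 := by
  have h : ((n + 2 ^ 1 : ℕ) : ℚ) < ((2 ^ n + 1 : ℕ) : ℚ) := by
    exact_mod_cast add_two_pow_lt_two_pow_add one_pos hn
  push_cast at h
  linarith [(Nat.cast_nonneg ℓ : (0 : ℚ) ≤ ℓ)]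

theorem one_div_R_eq {n : ℕ} (hn : 2 ≤ n) (ℓ : ℕ) : 1 / R n ℓ = 1 - oneSubInvR n ℓ := by
  have h := (two_pow_add_sub_sub_one_pos hn ℓ).ne'
  rw [R, oneSubInvR, one_div_div]
  field_simp
  ring

theorem oneSubInvR_nonneg {n : ℕ} (hn : 2 ≤ n) (ℓ : ℕ) : 0 ≤ oneSubInvR n ℓ :=
  div_nonneg (sub_nonneg.2 (one_le_pow₀ one_le_two)) (two_pow_add_sub_sub_one_pos hn ℓ).le

theorem oneSubInvR_zero (n : ℕ) : oneSubInvR n 0 = 0 := by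
  simp [oneSubInvR]

theorem two_mul_oneSubInvR_lt {n k : ℕ} (hk : k + 1 < n) :
    2 * oneSubInvR n k < oneSubInvR n (k + 1) := by
  have hB := two_pow_add_sub_sub_one_pos (n := n) (by omega) k
  have key : ((n + 2 ^ (k + 1) : ℕ) : ℚ) < ((2 ^ n + (k + 1) : ℕ) : ℚ) := by
    exact_mod_cast add_two_pow_lt_two_pow_add k.succ_pos hk
  push_cast [oneSubInvR] at key ⊢
  rw [pow_succ] at key ⊢
  rw [mul_div_assoc', div_lt_div_iff₀ hB (by linarith)]
  linarith

theorem one_div_R_lt_general (n ℓ ℓ₁ ℓ₂ : ℕ) (hℓ : ℓ ≤ n - 1)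
    (h1 : ℓ₁ < ℓ) (h2 : ℓ₂ < ℓ) :
    1 / R n ℓ < 1 / R n ℓ₁ + 1 / R n ℓ₂ - 1 / R n 0 := by
  have hn : 2 ≤ n := by omega
  have key : oneSubInvR n ℓ₁ + oneSubInvR n ℓ₂ < oneSubInvR n ℓ :=
    add_lt_of_two_mul_lt_succ (oneSubInvR_nonneg hn)
      (fun k hk ↦ two_mul_oneSubInvR_lt (by omega)) h1 h2
  simp only [one_div_R_eq hn, oneSubInvR_zero]
  linarith

/-- If `ℓ₁ < ℓ` and `ℓ₂ < ℓ` (with `ℓ ≤ n-1`), then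
`1/R_ℓ < 1/R_{ℓ₁} + 1/R_{ℓ₂} - 1/R_0`. -/
theorem one_div_R_lt (n ℓ ℓ₁ ℓ₂ : ℕ) (hn : 2 ≤ n) (hℓ : ℓ ≤ n - 1)
    (h1 : ℓ₁ < ℓ) (h2 : ℓ₂ < ℓ) :
    1 / R n ℓ < 1 / R n ℓ₁ + 1 / R n ℓ₂ - 1 / R n 0 :=
  one_div_R_lt_general n ℓ ℓ₁ ℓ₂ hℓ h1 h2
end

section
/- Let n ≥ 3 and let α > 1 be a positive integer. Consider the instance k with k_i = α for i ≠ h and k_h = 1, for some fixed h ∈ {0,...,n}. If an ordering E has cost function in which the dimension k_h appears in all n−1 terms, then T(E, k) = (n−1)α², while any ordering B in which k_h appears in exactly n−2 terms has T(B, k) = α³ + (n−2)α². Consequently, T(B,k)/T(E,k) − 1 = (α − 1)/(n − 1), which tends to infinity as α → ∞. -/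
/-- Cost of an ordering (set of index triplets) on a real-valued instance. -/
def chainCost {n : ℕ} (A : Finset (Fin (n+1) × Fin (n+1) × Fin (n+1)))
    (k : Fin (n+1) → ℝ) : ℝ :=
  ∑ t ∈ A, k t.1 * k t.2.1 * k t.2.2

lemma term_with_h {n h α : ℕ} (k : Fin (n+1) → ℝ)
    (hk : ∀ i, k i = if (i : ℕ) = h then 1 else (α : ℝ))
    (t : Fin (n+1) × Fin (n+1) × Fin (n+1))
    (hd : t.1 ≠ t.2.1 ∧ t.1 ≠ t.2.2 ∧ t.2.1 ≠ t.2.2)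
    (hh : (t.1 : ℕ) = h ∨ (t.2.1 : ℕ) = h ∨ (t.2.2 : ℕ) = h) :
    k t.1 * k t.2.1 * k t.2.2 = (α : ℝ)^2 := by
  obtain ⟨d1, d2, d3⟩ := hd
  rw [hk, hk, hk]
  rcases hh with h1 | h1 | h1 <;>
    [ (have e2 : (t.2.1 : ℕ) ≠ h := fun e => d1 (Fin.ext (h1.trans e.symm));
       have e3 : (t.2.2 : ℕ) ≠ h := fun e => d2 (Fin.ext (h1.trans e.symm)));
      (have e2 : (t.1 : ℕ) ≠ h := fun e => d1 (Fin.ext (e.trans h1.symm));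
       have e3 : (t.2.2 : ℕ) ≠ h := fun e => d3 (Fin.ext (h1.trans e.symm)));
      (have e2 : (t.1 : ℕ) ≠ h := fun e => d2 (Fin.ext (e.trans h1.symm));
       have e3 : (t.2.1 : ℕ) ≠ h := fun e => d3 (Fin.ext (e.trans h1.symm)))] <;>
    simp [h1, e2, e3] <;> ring

lemma term_without_h {n h α : ℕ} (k : Fin (n+1) → ℝ)
    (hk : ∀ i, k i = if (i : ℕ) = h then 1 else (α : ℝ))
    (t : Fin (n+1) × Fin (n+1) × Fin (n+1))
    (hh : ¬((t.1 : ℕ) = h ∨ (t.2.1 : ℕ) = h ∨ (t.2.2 : ℕ) = h)) :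
    k t.1 * k t.2.1 * k t.2.2 = (α : ℝ)^3 := by
  push_neg at hh
  rw [hk, hk, hk]
  simp [hh.1, hh.2.1, hh.2.2]
  ring

/-- On the instance with `k_h = 1` and `k_i = α` otherwise: an ordering `E`
whose `n-1` terms all contain `k_h` has cost `(n-1)α²`; an ordering `B` in
which `k_h` appears in exactly `n-2` terms has cost `α³ + (n-2)α²`; hence
`T(B,k)/T(E,k) - 1 = (α-1)/(n-1)`. -/
theorem fanout_cost_vs_other (n h α : ℕ) (hn : 3 ≤ n) (hh : h ≤ n) (hα : 1 < α)
    (k : Fin (n+1) → ℝ) (hk : ∀ i, k i = if (i : ℕ) = h then 1 else (α : ℝ))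
    (E B : Finset (Fin (n+1) × Fin (n+1) × Fin (n+1)))
    (hEcard : E.card = n - 1)
    (hEdist : ∀ t ∈ E, t.1 ≠ t.2.1 ∧ t.1 ≠ t.2.2 ∧ t.2.1 ≠ t.2.2)
    (hEh : ∀ t ∈ E, (t.1 : ℕ) = h ∨ (t.2.1 : ℕ) = h ∨ (t.2.2 : ℕ) = h)
    (hBcard : B.card = n - 1)
    (hBdist : ∀ t ∈ B, t.1 ≠ t.2.1 ∧ t.1 ≠ t.2.2 ∧ t.2.1 ≠ t.2.2)
    (hBh : (B.filter (fun t => (t.1 : ℕ) = h ∨ (t.2.1 : ℕ) = h ∨ (t.2.2 : ℕ) = h)).card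
      = n - 2) :
    chainCost E k = ((n : ℝ) - 1) * (α : ℝ)^2 ∧
    chainCost B k = (α : ℝ)^3 + ((n : ℝ) - 2) * (α : ℝ)^2 ∧
    chainCost B k / chainCost E k - 1 = ((α : ℝ) - 1) / ((n : ℝ) - 1) := by
  have hE : chainCost E k = ((n : ℝ) - 1) * (α : ℝ)^2 := by
    unfold chainCost
    rw [Finset.sum_congr rfl (fun t ht => term_with_h k hk t (hEdist t ht) (hEh t ht)),
      Finset.sum_const, hEcard, nsmul_eq_mul]
    have : ((n - 1 : ℕ) : ℝ) = (n : ℝ) - 1 := by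
      have : 1 ≤ n := by omega
      push_cast [this]; ring
    rw [this]
  have hB : chainCost B k = (α : ℝ)^3 + ((n : ℝ) - 2) * (α : ℝ)^2 := by
    unfold chainCost
    set p := fun t : Fin (n+1) × Fin (n+1) × Fin (n+1) =>
      (t.1 : ℕ) = h ∨ (t.2.1 : ℕ) = h ∨ (t.2.2 : ℕ) = h with hp
    rw [← Finset.sum_filter_add_sum_filter_not B p]
    have h1 : ∑ t ∈ B.filter p, k t.1 * k t.2.1 * k t.2.2 = ((n : ℝ) - 2) * (α : ℝ)^2 := by
      rw [Finset.sum_congr rfl (fun t ht => by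
        have htB := Finset.mem_filter.mp ht
        exact term_with_h k hk t (hBdist t htB.1) htB.2),
        Finset.sum_const, hBh, nsmul_eq_mul]
      have : ((n - 2 : ℕ) : ℝ) = (n : ℝ) - 2 := by
        have : 2 ≤ n := by omega
        push_cast [this]; ring
      rw [this]
    have hBh' : (B.filter p).card = n - 2 := hBh
    have hcard : (B.filter (fun t => ¬ p t)).card = 1 := by
      have := Finset.card_filter_add_card_filter_not (s := B) (p := p)
      omega
    have h2 : ∑ t ∈ B.filter (fun t => ¬ p t), k t.1 * k t.2.1 * k t.2.2 = (α : ℝ)^3 := by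
      rw [Finset.sum_congr rfl (fun t ht => by
        have htB := Finset.mem_filter.mp ht
        exact term_without_h k hk t htB.2),
        Finset.sum_const, hcard, one_smul]
    rw [h1, h2]; ring
  refine ⟨hE, hB, ?_⟩
  rw [hE, hB]
  have hn1 : (n : ℝ) - 1 ≠ 0 := by
    have : (3 : ℝ) ≤ n := by exact_mod_cast hn
    linarith
  have hα0 : (α : ℝ) ≠ 0 := by positivity
  field_simp
  ring
end

section
/- Let n ≥ 3, let k = (k_0,...,k_n) be positive reals, let m minimize k_i, and let T_opt be the minimal cost over all orderings of the matrix chain. Then the cost of the fan-out ordering E_{n,m} satisfies T(E_{n,m}, k) < 2·T_opt. -/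
/-- Full parenthesisations of the subchain `M_{a+1} ⋯ M_c`. -/
inductive Paren : ℕ → ℕ → Type
  | leaf (i : ℕ) : Paren i (i + 1)
  | node {a b c : ℕ} : Paren a b → Paren b c → Paren a c

/-- The arithmetic cost of a parenthesisation on instance `k`. -/
def Paren.cost (k : ℕ → ℝ) : ∀ {a c : ℕ}, Paren a c → ℝ
  | _, _, .leaf _ => 0
  | _, _, @Paren.node a b c l r => l.cost k + r.cost k + k a * k b * k c

namespace FanoutAux

lemma paren_lt : ∀ {a c : ℕ}, Paren a c → a < c := by
  intro a c A
  induction A with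
  | leaf i => omega
  | node l r ih1 ih2 => omega

def pen (k : ℕ → ℝ) (km : ℝ) : ∀ {a c : ℕ}, Paren a c → ℝ
  | _, _, .leaf i => km * (k i * k (i+1))
  | _, _, .node _ _ => 0

lemma pen_leaf (k : ℕ → ℝ) (km : ℝ) (i : ℕ) : pen k km (Paren.leaf i) = km * (k i * k (i+1)) := rfl

lemma pen_node (k : ℕ → ℝ) (km : ℝ) {a b c : ℕ} (l : Paren a b) (r : Paren b c) :
    pen k km (l.node r) = 0 := rfl

lemma pen_le (k : ℕ → ℝ) (km : ℝ) (hkm : 0 ≤ km) :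
    ∀ {a c : ℕ} (A : Paren a c), 0 ≤ k a → 0 ≤ k c → pen k km A ≤ km * (k a * k c) := by
  intro a c A ha hc
  cases A with
  | leaf i => simp [pen]
  | node l r => simpa [pen] using mul_nonneg hkm (mul_nonneg ha hc)

lemma key (n : ℕ) (k : ℕ → ℝ) (hk : ∀ i ≤ n, 0 < k i) (km : ℝ)
    (hkm0 : 0 < km) (hkm : ∀ i ≤ n, km ≤ k i) :
    ∀ {a c : ℕ} (A : Paren a c), c ≤ n →
      km * ∑ i ∈ Finset.Ico a c, k i * k (i+1) ≤ 2 * A.cost k + pen k km A := by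
  intro a c A
  induction A with
  | leaf i =>
    intro hc
    simp [Paren.cost, pen]
  | node l r ih1 ih2 =>
    rename_i a b c
    intro hc
    have hab := paren_lt l
    have hbc := paren_lt r
    have hbn : b ≤ n := by omega
    have han : a ≤ n := by omega
    have h1 := ih1 hbn
    have h2 := ih2 hc
    have hpl := pen_le k km hkm0.le l (hk a han).le (hk b hbn).le
    have hpr := pen_le k km hkm0.le r (hk b hbn).le (hk c hc).le
    rw [← Finset.sum_Ico_consecutive _ hab.le hbc.le]
    have e1 : km * (k a * k b) ≤ k c * (k a * k b) :=
      mul_le_mul_of_nonneg_right (hkm c hc) (mul_nonneg (hk a han).le (hk b hbn).le)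
    have e2 : km * (k b * k c) ≤ k a * (k b * k c) :=
      mul_le_mul_of_nonneg_right (hkm a han) (mul_nonneg (hk b hbn).le (hk c hc).le)
    simp only [Paren.cost, pen_node]
    nlinarith [h1, h2, hpl, hpr, e1, e2]

lemma root (n : ℕ) (k : ℕ → ℝ) (hk : ∀ i ≤ n, 0 < k i) (km : ℝ)
    (hkm0 : 0 < km) (hkm : ∀ i ≤ n, km ≤ k i) :
    ∀ {a c : ℕ} (A : Paren a c), a + 3 ≤ c → c ≤ n →
      km * ((∑ i ∈ Finset.Ico a c, k i * k (i+1)) + k a * k c) ≤ 2 * A.cost k := by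
  intro a c A h3 hc
  cases A with
  | leaf i => omega
  | node l r =>
    rename_i b
    have hab := paren_lt l
    have hbc := paren_lt r
    have hbn : b ≤ n := by omega
    have han : a ≤ n := by omega
    have h1 := key n k hk km hkm0 hkm l hbn
    have h2 := key n k hk km hkm0 hkm r hc
    rw [← Finset.sum_Ico_consecutive _ hab.le hbc.le]
    have e1 : km * (k a * k c) ≤ k b * (k a * k c) :=
      mul_le_mul_of_nonneg_right (hkm b hbn) (mul_nonneg (hk a han).le (hk c hc).le)
    cases l with
    | leaf i =>
      -- b = a + 1, so r cannot be a leaf since a + 3 ≤ c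
      cases r with
      | leaf j => omega
      | node r1 r2 =>
        have e2 : km * (k a * k (a+1)) ≤ k c * (k a * k (a+1)) :=
          mul_le_mul_of_nonneg_right (hkm c hc)
            (mul_nonneg (hk a han).le (hk (a+1) (by omega)).le)
        rw [pen_leaf] at h1
        rw [pen_node] at h2
        simp only [Paren.cost] at h1 h2 ⊢
        nlinarith [h1, h2, e1, e2]
    | node l1 l2 =>
      have hpr := pen_le k km hkm0.le r (hk b hbn).le (hk c hc).le
      have e2 : km * (k b * k c) ≤ k a * (k b * k c) :=
        mul_le_mul_of_nonneg_right (hkm a han) (mul_nonneg (hk b hbn).le (hk c hc).le)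
      rw [pen_node] at h1
      simp only [Paren.cost] at h1 ⊢
      nlinarith [h1, h2, hpr, e1, e2]

end FanoutAux

/-- If `A` is an optimal ordering and `m` minimises `k_i`, then the cost of the
fan-out ordering `E_{n,m}`, i.e. `Σ_{i ∉ {m, m+1 mod n+1}} k_{i-1}·k_i·k_m`
(indices mod `n+1`), is strictly less than twice the optimal cost. -/
theorem fanout_lt_two_opt (n : ℕ) (hn : 3 ≤ n) (k : ℕ → ℝ)
    (hk : ∀ i ≤ n, 0 < k i) (m : Fin (n+1))
    (hm : ∀ i : Fin (n+1), k (m : ℕ) ≤ k (i : ℕ))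
    (A : Paren 0 n) (hopt : ∀ B : Paren 0 n, A.cost k ≤ B.cost k) :
    (∑ i ∈ Finset.univ \ {m, m + 1},
        k ((i - 1 : Fin (n+1)) : ℕ) * k (i : ℕ) * k (m : ℕ)) < 2 * A.cost k := by
  have hkm0 : 0 < k (m : ℕ) := hk _ m.is_le
  have hkm : ∀ i ≤ n, k (m : ℕ) ≤ k i := fun i hi => hm ⟨i, by omega⟩
  set g : Fin (n+1) → ℝ := fun i => k ((i - 1 : Fin (n+1)) : ℕ) * k (i : ℕ) * k (m : ℕ)
    with hg
  have hne : m ≠ m + 1 := by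
    rw [Ne, left_eq_add, Fin.one_eq_zero_iff]; omega
  have hsplit : ∑ i ∈ Finset.univ \ {m, m + 1}, g i
      = (∑ i, g i) - (g m + g (m + 1)) := by
    rw [Finset.sum_sdiff_eq_sub (Finset.subset_univ _), Finset.sum_pair hne]
  have hshift : ∑ i, g i
      = ∑ i : Fin (n+1), k (i : ℕ) * k ((i + 1 : Fin (n+1)) : ℕ) * k (m : ℕ) := by
    refine (Fintype.sum_equiv (Equiv.addRight (1 : Fin (n+1))) _ g fun i => ?_).symm
    simp [hg, Equiv.coe_addRight, add_sub_cancel_right]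
  have hF : ∑ i : Fin (n+1), k (i : ℕ) * k ((i + 1 : Fin (n+1)) : ℕ) * k (m : ℕ)
      = k (m : ℕ) * ((∑ i ∈ Finset.Ico 0 n, k i * k (i+1)) + k 0 * k n) := by
    rw [Fin.sum_univ_castSucc]
    have hterm : ∀ i : Fin n,
        k ((i.castSucc : Fin (n+1)) : ℕ) * k ((i.castSucc + 1 : Fin (n+1)) : ℕ) * k (m : ℕ)
          = k (m : ℕ) * (k (i : ℕ) * k ((i : ℕ) + 1)) := by
      intro i
      rw [Fin.coe_castSucc, Fin.val_add_one_of_lt (Fin.castSucc_lt_last i), Fin.coe_castSucc]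
      ring
    rw [Finset.sum_congr rfl (fun i _ => hterm i), ← Finset.mul_sum]
    have hlastv : ((Fin.last n : Fin (n+1)) : ℕ) = n := rfl
    have hlast : ((Fin.last n + 1 : Fin (n+1)) : ℕ) = 0 := by
      rw [Fin.last_add_one]; rfl
    rw [hlastv, hlast, Fin.sum_univ_eq_sum_range (fun j => k j * k (j+1)), Finset.range_eq_Ico]
    ring
  have hgm : 0 < g m := by
    refine mul_pos (mul_pos (hk _ (Fin.is_le _)) hkm0) hkm0
  have hgm1 : 0 < g (m + 1) := by
    refine mul_pos (mul_pos (hk _ (Fin.is_le _)) (hk _ (Fin.is_le _))) hkm0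
  have hroot := FanoutAux.root n k hk (k (m : ℕ)) hkm0 hkm A (by omega) (le_refl n)
  calc (∑ i ∈ Finset.univ \ {m, m + 1}, g i)
      = (∑ i, g i) - (g m + g (m + 1)) := hsplit
    _ < ∑ i, g i := by linarith
    _ = k (m : ℕ) * ((∑ i ∈ Finset.Ico 0 n, k i * k (i+1)) + k 0 * k n) := by
        rw [hshift, hF]
    _ ≤ 2 * A.cost k := hroot
end

section
/- For a matrix chain of length n ≥ 3 and any instance k of positive reals, the penalty of removing all non-essential orderings is strictly less than 1: that is, min over fan-out orderings E_{n,h} (h ∈ {0,...,n}) of T(E_{n,h}, k), divided by min over all orderings A of T(A, k), is strictly less than 2. -/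
/-- The cost of the fan-out ordering `E_{n,h}`:
`Σ_{i ∉ {h, h+1 mod n+1}} k_{i-1}·k_i·k_h` (indices mod `n+1`). -/
def fanoutCost (n : ℕ) (k : ℕ → ℝ) (h : Fin (n+1)) : ℝ :=
  ∑ i ∈ Finset.univ \ {h, h + 1}, k ((i - 1 : Fin (n+1)) : ℕ) * k (i : ℕ) * k (h : ℕ)

def adjacentSum (k : ℕ → ℝ) (a c : ℕ) : ℝ := ∑ i ∈ Finset.Ico a c, k i * k (i + 1)

section adjacentSum

variable {k : ℕ → ℝ}

lemma adjacentSum_add {a b c : ℕ} (hab : a ≤ b) (hbc : b ≤ c) :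
    adjacentSum k a b + adjacentSum k b c = adjacentSum k a c :=
  Finset.sum_Ico_consecutive _ hab hbc

lemma adjacentSum_succ (a : ℕ) : adjacentSum k a (a + 1) = k a * k (a + 1) := by
  simp [adjacentSum]

lemma sum_fin_sub_one_mul_eq_adjacentSum (n : ℕ) :
    ∑ i : Fin (n + 1), k ((i - 1 : Fin (n + 1)) : ℕ) * k i = adjacentSum k 0 n + k 0 * k n := by
  rw [Fin.sum_univ_succ, adjacentSum, ← Finset.range_eq_Ico,
    ← Fin.sum_univ_eq_sum_range (fun i => k i * k (i + 1))]
  simp [Fin.coe_sub_one, add_comm, mul_comm]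

end adjacentSum

lemma mul_mul_le_mul_mul {μ x y z : ℝ} (hx : 0 ≤ x) (hy : 0 ≤ y) (hz : μ ≤ z) :
    μ * (x * y) ≤ x * y * z := by
  rw [mul_comm μ]
  exact mul_le_mul_of_nonneg_left hz (mul_nonneg hx hy)

namespace Paren

variable {k : ℕ → ℝ} {μ : ℝ}

lemma lt : ∀ {a c : ℕ}, Paren a c → a < c
  | _, _, .leaf _ => Nat.lt_succ_self _
  | _, _, .node l r => l.lt.trans r.lt

lemma mul_adjacentSum_le_cost_node {a b c : ℕ} (l : Paren a b) (r : Paren b c) (hμ : 0 ≤ μ)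
    (hk : ∀ i ∈ Set.Icc a c, μ ≤ k i)
    (hl : μ * adjacentSum k a b ≤ 2 * l.cost k + μ * (k a * k b))
    (hr : μ * adjacentSum k b c ≤ 2 * r.cost k + μ * (k b * k c)) :
    μ * adjacentSum k a c ≤ 2 * (l.node r).cost k := by
  have hab := l.lt.le
  have hbc := r.lt.le
  have hka := hk a (Set.left_mem_Icc.2 (hab.trans hbc))
  have hkb := hk b ⟨hab, hbc⟩
  have hkc := hk c (Set.right_mem_Icc.2 (hab.trans hbc))
  have := mul_mul_le_mul_mul (hμ.trans hka) (hμ.trans hkb) hkc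
  have := mul_mul_le_mul_mul (hμ.trans hkb) (hμ.trans hkc) hka
  rw [← adjacentSum_add hab hbc, cost]
  linarith

lemma mul_adjacentSum_le (hμ : 0 ≤ μ) :
    ∀ {a c : ℕ} (P : Paren a c), (∀ i ∈ Set.Icc a c, μ ≤ k i) →
      μ * adjacentSum k a c ≤ 2 * P.cost k + μ * (k a * k c)
  | _, _, .leaf a, _ => by simp [adjacentSum_succ, cost]
  | a, c, .node l r, hk => by
    have hac := l.lt.le.trans r.lt.le
    have := mul_adjacentSum_le_cost_node l r hμ hk
      (mul_adjacentSum_le hμ l fun i hi => hk i (Set.Icc_subset_Icc_right r.lt.le hi))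
      (mul_adjacentSum_le hμ r fun i hi => hk i (Set.Icc_subset_Icc_left l.lt.le hi))
    have := mul_nonneg hμ (mul_nonneg (hμ.trans (hk a (Set.left_mem_Icc.2 hac)))
      (hμ.trans (hk c (Set.right_mem_Icc.2 hac))))
    linarith

lemma mul_adjacentSum_le_of_add_two_le (hμ : 0 ≤ μ) {a c : ℕ} (P : Paren a c) (hac : a + 2 ≤ c)
    (hk : ∀ i ∈ Set.Icc a c, μ ≤ k i) : μ * adjacentSum k a c ≤ 2 * P.cost k := by
  cases P with
  | leaf => omega
  | node l r =>
    exact mul_adjacentSum_le_cost_node l r hμ hk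
      (mul_adjacentSum_le hμ l fun i hi => hk i (Set.Icc_subset_Icc_right r.lt.le hi))
      (mul_adjacentSum_le hμ r fun i hi => hk i (Set.Icc_subset_Icc_left l.lt.le hi))

lemma mul_adjacentSum_add_le (hμ : 0 ≤ μ) {a c : ℕ} (P : Paren a c) (hac : a + 3 ≤ c)
    (hk : ∀ i ∈ Set.Icc a c, μ ≤ k i) :
    μ * (adjacentSum k a c + k a * k c) ≤ 2 * P.cost k := by
  cases P with
  | leaf => omega
  | @node _ b _ l r =>
    have hab := l.lt.le
    have hbc := r.lt.le
    have hka := hk a (Set.left_mem_Icc.2 (hab.trans hbc))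
    have hkb := hk b ⟨hab, hbc⟩
    have hkc := hk c (Set.right_mem_Icc.2 (hab.trans hbc))
    have hkl : ∀ i ∈ Set.Icc a b, μ ≤ k i := fun i hi => hk i (Set.Icc_subset_Icc_right hbc hi)
    have hkr : ∀ i ∈ Set.Icc b c, μ ≤ k i := fun i hi => hk i (Set.Icc_subset_Icc_left hab hi)
    have hac := mul_mul_le_mul_mul (hμ.trans hka) (hμ.trans hkc) hkb
    rw [← adjacentSum_add hab hbc, cost]
    rcases (by omega : a + 2 ≤ b ∨ b + 2 ≤ c) with hab2 | hbc2
    · have hl := mul_adjacentSum_le_of_add_two_le hμ l hab2 hkl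
      have hr := mul_adjacentSum_le hμ r hkr
      have hbc' := mul_mul_le_mul_mul (hμ.trans hkb) (hμ.trans hkc) hka
      linarith
    · have hl := mul_adjacentSum_le hμ l hkl
      have hr := mul_adjacentSum_le_of_add_two_le hμ r hbc2 hkr
      have hab' := mul_mul_le_mul_mul (hμ.trans hka) (hμ.trans hkb) hkc
      linarith

end Paren

lemma fanoutCost_lt_mul {n : ℕ} {k : ℕ → ℝ} (hk : ∀ i ≤ n, 0 < k i) (h : Fin (n + 1)) :
    fanoutCost n k h < k h * (adjacentSum k 0 n + k 0 * k n) := by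
  have hpos (i : Fin (n + 1)) : 0 < k ((i - 1 : Fin (n + 1)) : ℕ) * k i :=
    mul_pos (hk _ (Fin.is_le _)) (hk _ (Fin.is_le _))
  rw [fanoutCost, ← Finset.sum_mul, ← sum_fin_sub_one_mul_eq_adjacentSum, mul_comm]
  refine mul_lt_mul_of_pos_left ?_ (hk _ h.is_le)
  exact Finset.sum_lt_sum_of_subset Finset.sdiff_subset (Finset.mem_univ h) (by simp) (hpos h)
    fun j _ _ => (hpos j).le

theorem min_fanout_lt_two_min_all_general (n : ℕ) (hn : 3 ≤ n) (k : ℕ → ℝ)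
    (hk : ∀ i ≤ n, 0 < k i)
    (A : Paren 0 n) :
    (Finset.univ.inf' Finset.univ_nonempty (fanoutCost n k)) < 2 * A.cost k := by
  obtain ⟨m, -, hm⟩ := Finset.exists_min_image Finset.univ (fun i : Fin (n + 1) => k i)
    Finset.univ_nonempty
  have hμ : ∀ i ∈ Set.Icc 0 n, k m ≤ k i := fun i hi =>
    hm ⟨i, Nat.lt_succ_of_le hi.2⟩ (Finset.mem_univ _)
  calc Finset.univ.inf' Finset.univ_nonempty (fanoutCost n k)
      ≤ fanoutCost n k m := Finset.inf'_le _ (Finset.mem_univ m)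
    _ < k m * (adjacentSum k 0 n + k 0 * k n) := fanoutCost_lt_mul hk m
    _ ≤ 2 * A.cost k := A.mul_adjacentSum_add_le (hk m m.is_le).le (by omega) hμ

/-- The minimum over the fan-out orderings `E_{n,h}` of their cost is strictly
less than twice the minimum cost over all orderings: the penalty of removing
all non-essential orderings is strictly less than `1`. -/
theorem min_fanout_lt_two_min_all (n : ℕ) (hn : 3 ≤ n) (k : ℕ → ℝ)
    (hk : ∀ i ≤ n, 0 < k i)
    (A : Paren 0 n) (hopt : ∀ B : Paren 0 n, A.cost k ≤ B.cost k) :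
    (Finset.univ.inf' Finset.univ_nonempty (fanoutCost n k)) < 2 * A.cost k :=
  min_fanout_lt_two_min_all_general n hn k hk A
end
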